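/- Let Σ be a p×p real positive definite matrix, let β_T, β_C ∈ ℝ^p, and let n_T, n_C be positive real numbers with N = n_T + n_C. Then equality (1/n_T)·β_Tᵀ Σ β_T + (1/n_C)·β_Cᵀ Σ β_C = (1/N)·(β_T − β_C)ᵀ Σ (β_T − β_C) holds if and only if β_C = −(n_C/n_T)·β_T. -/

import Mathlib

open Matrix

/-!
Writing `q` for the quadratic form of `Σ`, clearing denominators gives
`q βT / nT + q βC / nC - q (βT - βC) / N = q (nC • βT + nT • βC) / (nT * nC * N)`.
Positive definiteness makes the right-hand side vanish exactly when `nC • βT + nT • βC = 0`.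
-/

namespace QuadraticMap

variable {K M : Type*} [Field K] [AddCommGroup M] [Module K M]

theorem map_smul_add_smul (Q : QuadraticMap K M K) (a b : K) (x y : M) :
    Q (a • x + b • y) = a ^ 2 * Q x + b ^ 2 * Q y + a * b * polar Q x y := by
  rw [QuadraticMap.map_add (⇑Q), Q.map_smul, Q.map_smul, polar_smul_left, polar_smul_right]
  simp only [smul_eq_mul]
  ring

theorem map_sub_eq_add_sub_polar (Q : QuadraticMap K M K) (x y : M) :
    Q (x - y) = Q x + Q y - polar Q x y := by
  rw [sub_eq_add_neg, QuadraticMap.map_add (⇑Q), Q.map_neg, polar_neg_right]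
  ring

theorem div_add_div_sub_map_sub_div (Q : QuadraticMap K M K) {a b : K}
    (ha : a ≠ 0) (hb : b ≠ 0) (hab : a + b ≠ 0) (x y : M) :
    Q x / a + Q y / b - Q (x - y) / (a + b) = Q (b • x + a • y) / (a * b * (a + b)) := by
  rw [map_smul_add_smul, map_sub_eq_add_sub_polar]
  field_simp
  ring

theorem Anisotropic.div_add_div_eq_map_sub_div_iff {Q : QuadraticMap K M K}
    (hQ : Q.Anisotropic) {a b : K} (ha : a ≠ 0) (hb : b ≠ 0) (hab : a + b ≠ 0) (x y : M) :
    Q x / a + Q y / b = Q (x - y) / (a + b) ↔ y = -(b / a) • x := by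
  have hcomb_eq_zero : b • x + a • y = 0 ↔ y = -(b / a) • x := by
    rw [← smul_right_inj ha (m₁ := y), smul_smul, mul_neg, mul_div_cancel₀ b ha, neg_smul,
      eq_neg_iff_add_eq_zero, add_comm]
  rw [← sub_eq_zero, div_add_div_sub_map_sub_div Q ha hb hab, div_eq_zero_iff,
    or_iff_left (by simp [ha, hb, hab]), ← hcomb_eq_zero]
  exact ⟨hQ _, fun h ↦ h ▸ Q.map_zero⟩

end QuadraticMap

theorem avar_equality_iff_general
    {p : ℕ} (S : Matrix (Fin p) (Fin p) ℝ)
    (hPD : ∀ v : Fin p → ℝ, v ≠ 0 → 0 < v ⬝ᵥ (S *ᵥ v))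
    (βT βC : Fin p → ℝ) (nT nC N : ℝ)
    (hnT : 0 < nT) (hnC : 0 < nC) (hN : N = nT + nC) :
    (1 / nT) * (βT ⬝ᵥ (S *ᵥ βT)) + (1 / nC) * (βC ⬝ᵥ (S *ᵥ βC)) =
      (1 / N) * ((βT - βC) ⬝ᵥ (S *ᵥ (βT - βC))) ↔
      βC = -(nC / nT) • βT := by
  have hQ : ∀ v, S.toQuadraticForm' v = v ⬝ᵥ (S *ᵥ v) := fun v ↦ toLinearMap₂'_apply' S v v
  have hAniso : S.toQuadraticForm'.Anisotropic := fun v hv ↦ by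
    by_contra hne
    exact (hPD v hne).ne' (hQ v ▸ hv)
  simp only [one_div_mul_eq_div, hN, ← hQ]
  exact hAniso.div_add_div_eq_map_sub_div_iff hnT.ne' hnC.ne' (by positivity) βT βC

/-- equality case of Theorem 4.5. For a positive definite
`p × p` real matrix `Σ`, equality
`(1/nT)·βTᵀ Σ βT + (1/nC)·βCᵀ Σ βC = (1/N)·(βT − βC)ᵀ Σ (βT − βC)`
holds iff `βC = −(nC/nT)·βT`. -/
theorem avar_equality_iff
    {p : ℕ} (S : Matrix (Fin p) (Fin p) ℝ)
    (hSym : Sᵀ = S)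
    (hPD : ∀ v : Fin p → ℝ, v ≠ 0 → 0 < v ⬝ᵥ (S *ᵥ v))
    (βT βC : Fin p → ℝ) (nT nC N : ℝ)
    (hnT : 0 < nT) (hnC : 0 < nC) (hN : N = nT + nC) :
    (1 / nT) * (βT ⬝ᵥ (S *ᵥ βT)) + (1 / nC) * (βC ⬝ᵥ (S *ᵥ βC)) =
      (1 / N) * ((βT - βC) ⬝ᵥ (S *ᵥ (βT - βC))) ↔
      βC = -(nC / nT) • βT :=
  avar_equality_iff_general S hPD βT βC nT nC N hnT hnC hN
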